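/- arXiv:2510.20789 — 6 statements merged into one kernel-verified Lean document; each statement's English description precedes it below -/
import Mathlib

section
/- Let k, n, d be positive integers with k ≤ n, let ψ_1, …, ψ_n ∈ ℂ^d be (possibly subnormalized) vectors, and let G be their Gram matrix. Then the infimum, over all POVMs {M_S} indexed by the k-element subsets S of {1,…,n} (i.e., families of d×d positive semidefinite matrices with ∑_{|S|=k} M_S = I), of the quantity (1/n)·∑_{i=1}^n ⟨ψ_i, (∑_{S : i∉S} M_S) ψ_i⟩, equals the infimum, over all families {W_S} of n×n positive semidefinite matrices indexed by the k-element subsets S of {1,…,n} with ∑_{|S|=k} W_S = (1/n)·G, of the quantity ∑_{i=1}^n (∑_{S : i∉S} W_S)_{ii}; moreover both infima are attained. -/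
open Matrix BigOperators Finset ComplexOrder

noncomputable section

/-- The number of nonzero entries of a vector in `ℂ^n`. -/
def suppCard {n : ℕ} (v : Fin n → ℂ) : ℕ :=
  (Finset.univ.filter fun i => v i ≠ 0).card

/-- A matrix `X` is `k`-incoherent if it can be written as `∑ vᵢ vᵢ*` where each `vᵢ`
has at most `k` nonzero entries. -/
def KIncoherent {n : ℕ} (k : ℕ) (X : Matrix (Fin n) (Fin n) ℂ) : Prop :=
  ∃ (m : ℕ) (v : Fin m → (Fin n → ℂ)),
    (∀ i, suppCard (v i) ≤ k) ∧ X = ∑ i, vecMulVec (v i) (star (v i))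

/-- The set `I_k` of positive semidefinite, `k`-incoherent matrices with trace at most `1`. -/
def Ik (n k : ℕ) : Set (Matrix (Fin n) (Fin n) ℂ) :=
  {X | X.PosSemidef ∧ KIncoherent k X ∧ X.trace.re ≤ 1}

/-- The Gram matrix of a list of vectors in `ℂ^d`. -/
def gramMatrix {n d : ℕ} (ψ : Fin n → (Fin d → ℂ)) : Matrix (Fin n) (Fin n) ℂ :=
  Matrix.of fun i j => star (ψ i) ⬝ᵥ ψ j

/-- A list of states `ψ₁, …, ψₙ` is `k`-learnable if there is a POVM indexed by the
`k`-element subsets of `{1, …, n}` such that `⟨ψᵢ, M_S ψᵢ⟩ = 0` whenever `i ∉ S`. -/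
def KLearnable {n d : ℕ} (k : ℕ) (ψ : Fin n → (Fin d → ℂ)) : Prop :=
  ∃ M : {S : Finset (Fin n) // S.card = k} → Matrix (Fin d) (Fin d) ℂ,
    (∀ S, (M S).PosSemidef) ∧ (∑ S, M S) = 1 ∧
    ∀ (S : {S : Finset (Fin n) // S.card = k}) (i : Fin n),
      i ∉ S.val → star (ψ i) ⬝ᵥ ((M S) *ᵥ ψ i) = 0

/-- The Frobenius norm of a square complex matrix. -/
def frobNorm {m : ℕ} (A : Matrix (Fin m) (Fin m) ℂ) : ℝ :=
  Real.sqrt (∑ i, ∑ j, ‖A i j‖ ^ 2)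

/-!
Let `A` be the `d × n` matrix with columns `ψᵢ`, so that `gramMatrix ψ = AᴴA =: G`. A POVM `M`
gives the Gram-side family `W_S = n⁻¹ • AᴴM_S A` with the same objective value. Conversely, each
`n • W_S` is positive semidefinite and at most `G`, hence vanishes on `ker G`; with `G⁺` the
pseudo-inverse of `G` and `P = A G⁺ Aᴴ` the projection onto the range of `A`, the family
`M_S = n • A G⁺ W_S G⁺ Aᴴ`, completed by `1 - P` at one index, is a POVM with `AᴴM_S A = n • W_S`.
So both problems have the same set of values, and its infimum is attained because the POVMs
form a compact set.
-/

theorem CStarAlgebra.isCompact_setOf_nonneg_sum_eq_one {A ι : Type*} [CStarAlgebra A]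
    [PartialOrder A] [StarOrderedRing A] [ProperSpace A] [Fintype ι] :
    IsCompact {M : ι → A | (∀ S, 0 ≤ M S) ∧ ∑ S, M S = 1} := by
  have hIcc : IsCompact (Set.Icc (0 : A) 1) :=
    Metric.isCompact_of_isClosed_isBounded isClosed_Icc <|
      (Metric.isBounded_closedBall (x := 0) (r := 1)).subset fun a ha => by
        simpa using (CStarAlgebra.mem_Icc_iff_norm_le_one.mp ha).2
  refine (isCompact_univ_pi fun _ => hIcc).of_isClosed_subset ?_ ?_
  · simp only [Set.ofPred_and, Set.ofPred_forall]
    exact (isClosed_iInter fun S => isClosed_le continuous_const (continuous_apply S)).inter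
      (isClosed_eq (by fun_prop) continuous_const)
  · rintro M ⟨hM, hsum⟩ S -
    exact ⟨hM S, hsum ▸ single_le_sum (fun T _ => hM T) (mem_univ S)⟩

open scoped Matrix.Norms.L2Operator MatrixOrder in
theorem Matrix.isCompact_setOf_posSemidef_sum_eq_one {m ι : Type*} [Fintype m] [DecidableEq m]
    [Fintype ι] : IsCompact {M : ι → Matrix m m ℂ | (∀ S, (M S).PosSemidef) ∧ ∑ S, M S = 1} := by
  simpa only [nonneg_iff_posSemidef] using
    CStarAlgebra.isCompact_setOf_nonneg_sum_eq_one (A := Matrix m m ℂ) (ι := ι)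

namespace Matrix

variable {m n ι 𝕜 : Type*} [RCLike 𝕜]

lemma conjTranspose_mul_mul_apply {α : Type*} [NonUnitalSemiring α] [StarRing α] [Fintype m]
    (A : Matrix m n α) (M : Matrix m m α) (i j : n) :
    (Aᴴ * M * A) i j = star (Aᵀ i) ⬝ᵥ (M *ᵥ Aᵀ j) := by
  simp only [mul_apply, conjTranspose_apply, dotProduct, mulVec, transpose_apply, Pi.star_apply,
    Finset.sum_mul, Finset.mul_sum, mul_assoc]
  exact Finset.sum_comm

variable [Fintype ι]

lemma exists_posSemidef_sum_eq_one [DecidableEq m] [Nonempty ι] :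
    ∃ M : ι → Matrix m m 𝕜, (∀ S, (M S).PosSemidef) ∧ ∑ S, M S = 1 := by
  classical
  obtain ⟨S₀⟩ := ‹Nonempty ι›
  refine ⟨fun S => if S = S₀ then 1 else 0, fun S => ?_, by simp⟩
  by_cases h : S = S₀ <;> simp [h, PosSemidef.one, PosSemidef.zero]

variable [Fintype n]

lemma PosSemidef.mulVec_eq_zero_of_sum_mulVec_eq_zero {W : ι → Matrix n n 𝕜}
    (hW : ∀ S, (W S).PosSemidef) {x : n → 𝕜} (hx : (∑ S, W S) *ᵥ x = 0) (S : ι) :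
    W S *ᵥ x = 0 := by
  have hsum : ∑ T, star x ⬝ᵥ (W T *ᵥ x) = 0 := by
    rw [← dotProduct_sum, ← sum_mulVec, hx, dotProduct_zero]
  rw [← (hW S).dotProduct_mulVec_zero_iff]
  exact (sum_eq_zero_iff_of_nonneg fun T _ => (hW T).dotProduct_mulVec_nonneg x).mp hsum S
    (mem_univ S)

variable [DecidableEq n]

-- By the convention `0⁻¹ = 0`, `cfc (·⁻¹ : ℝ → ℝ) G` is the Moore–Penrose pseudo-inverse of `G`.

lemma cfc_mul_cfc (G : Matrix n n 𝕜) (f g : ℝ → ℝ) :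
    cfc f G * cfc g G = cfc (fun x => f x * g x) G :=
  (cfc_mul f g G (finite_real_spectrum.continuousOn _) (finite_real_spectrum.continuousOn _)).symm

lemma IsHermitian.mul_cfc_inv_mul_self {G : Matrix n n 𝕜} (hG : G.IsHermitian) :
    G * cfc (·⁻¹ : ℝ → ℝ) G * G = G := calc
  _ = cfc (fun x : ℝ => x) G * cfc (·⁻¹ : ℝ → ℝ) G * cfc (fun x : ℝ => x) G := by
    rw [cfc_id' ℝ G]
  _ = cfc (fun x : ℝ => x * x⁻¹ * x) G := by rw [cfc_mul_cfc, cfc_mul_cfc]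
  _ = G := by simp_rw [mul_inv_mul_cancel]; exact cfc_id' ℝ G

lemma IsHermitian.cfc_inv_mul_self_mul_cfc_inv {G : Matrix n n 𝕜} (hG : G.IsHermitian) :
    cfc (·⁻¹ : ℝ → ℝ) G * G * cfc (·⁻¹ : ℝ → ℝ) G = cfc (·⁻¹ : ℝ → ℝ) G := calc
  _ = cfc (·⁻¹ : ℝ → ℝ) G * cfc (fun x : ℝ => x) G * cfc (·⁻¹ : ℝ → ℝ) G := by
    rw [cfc_id' ℝ G]
  _ = cfc (fun x : ℝ => x⁻¹ * x * x⁻¹) G := by rw [cfc_mul_cfc, cfc_mul_cfc]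
  _ = cfc (·⁻¹ : ℝ → ℝ) G := by simp_rw [fun x : ℝ => by simpa using mul_inv_mul_cancel x⁻¹]

lemma isHermitian_cfc (G : Matrix n n 𝕜) (f : ℝ → ℝ) : (cfc f G).IsHermitian :=
  cfc_predicate f G

theorem PosSemidef.mul_cfc_inv_mul_eq_of_sum_eq {W : ι → Matrix n n 𝕜}
    (hW : ∀ S, (W S).PosSemidef) {G : Matrix n n 𝕜} (hsum : ∑ S, W S = G) (S : ι) :
    G * cfc (·⁻¹ : ℝ → ℝ) G * W S * cfc (·⁻¹ : ℝ → ℝ) G * G = W S := by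
  set Gp := cfc (·⁻¹ : ℝ → ℝ) G
  have hG : G.IsHermitian := hsum ▸ (posSemidef_sum univ fun T _ => hW T).1
  have hGp : Gpᴴ = Gp := (isHermitian_cfc G _).eq
  have hright : W S * (Gp * G) = W S := ext_iff_mulVec.mpr fun v => by
    have hker : W S *ᵥ (v - (Gp * G) *ᵥ v) = 0 :=
      PosSemidef.mulVec_eq_zero_of_sum_mulVec_eq_zero hW (by
        rw [hsum, mulVec_sub, mulVec_mulVec, ← Matrix.mul_assoc, hG.mul_cfc_inv_mul_self,
          sub_self]) S
    rwa [mulVec_sub, sub_eq_zero, mulVec_mulVec, eq_comm] at hker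
  have hleft : G * Gp * W S = W S := by
    simpa only [conjTranspose_mul, hGp, hG.eq, (hW S).1.eq,
      Matrix.mul_assoc] using congrArg (·ᴴ) hright
  rw [hleft, Matrix.mul_assoc, hright]

theorem exists_posSemidef_sum_eq_one_conjTranspose_mul_mul_eq [Fintype m] [DecidableEq m]
    [Nonempty ι]
    (A : Matrix m n 𝕜) {W : ι → Matrix n n 𝕜} (hW : ∀ S, (W S).PosSemidef)
    (hsum : ∑ S, W S = Aᴴ * A) :
    ∃ M : ι → Matrix m m 𝕜, (∀ S, (M S).PosSemidef) ∧ ∑ S, M S = 1 ∧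
      ∀ S, Aᴴ * M S * A = W S := by
  classical
  obtain ⟨S₀⟩ := ‹Nonempty ι›
  set G := Aᴴ * A
  have hG : G.IsHermitian := isHermitian_conjTranspose_mul_self A
  set Gp := cfc (·⁻¹ : ℝ → ℝ) G
  have hGp : Gpᴴ = Gp := (isHermitian_cfc G _).eq
  set B := A * Gp
  set P := B * G * Bᴴ
  have hBB : Bᴴ * B = Gp := by
    rw [conjTranspose_mul, hGp, Matrix.mul_assoc, ← Matrix.mul_assoc Aᴴ,
      ← Matrix.mul_assoc, hG.cfc_inv_mul_self_mul_cfc_inv]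
  have hPP : P * P = P := calc
    P * P = B * (G * (Bᴴ * B) * G) * Bᴴ := by simp only [P, Matrix.mul_assoc]
    _ = P := by rw [hBB, hG.mul_cfc_inv_mul_self]
  have hP : P.IsHermitian := by
    simp only [IsHermitian, P, conjTranspose_mul, conjTranspose_conjTranspose, hG.eq,
      Matrix.mul_assoc]
  have hAPA : Aᴴ * P * A = G := calc
    Aᴴ * P * A = G * Gp * G * Gp * G := by
      simp only [P, B, G, conjTranspose_mul, hGp, Matrix.mul_assoc]
    _ = G := by rw [hG.mul_cfc_inv_mul_self, hG.mul_cfc_inv_mul_self]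
  have hQ : (1 - P).PosSemidef := by
    have h : (1 - P)ᴴ * (1 - P) = 1 - P := by
      simp only [conjTranspose_sub, conjTranspose_one, hP.eq, Matrix.sub_mul, Matrix.mul_sub,
        Matrix.one_mul, Matrix.mul_one, hPP, sub_self, sub_zero]
    exact h ▸ posSemidef_conjTranspose_mul_self (1 - P)
  refine ⟨fun S => B * W S * Bᴴ + if S = S₀ then 1 - P else 0, fun S => ?_, ?_, fun S => ?_⟩
  · refine ((hW S).mul_mul_conjTranspose_same B).add ?_
    rcases eq_or_ne S S₀ with rfl | h
    · simpa using hQ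
    · simpa [h] using PosSemidef.zero
  · rw [sum_add_distrib, ← Matrix.sum_mul, ← Matrix.mul_sum, hsum, Finset.sum_ite_eq',
      if_pos (mem_univ S₀)]
    exact add_sub_cancel P 1
  · have hAQA : Aᴴ * (1 - P) * A = 0 := by
      rw [Matrix.mul_sub, Matrix.sub_mul, hAPA, Matrix.mul_one, sub_self]
    have hAWA : Aᴴ * (B * W S * Bᴴ) * A = W S := calc
      _ = G * Gp * W S * Gp * G := by simp only [B, G, conjTranspose_mul, hGp, Matrix.mul_assoc]
      _ = W S := PosSemidef.mul_cfc_inv_mul_eq_of_sum_eq hW hsum S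
    rcases eq_or_ne S S₀ with rfl | h
    · simp [Matrix.mul_add, Matrix.add_mul, hAWA, hAQA]
    · simp [hAWA, h]

end Matrix

section Gram

variable {n d : ℕ} {ι : Type*} (ψ : Fin n → Fin d → ℂ) (s : Fin n → Finset ι)

lemma gramMatrix_eq_conjTranspose_mul : gramMatrix ψ = (of ψ)ᵀᴴ * (of ψ)ᵀ := by
  ext i j
  rw [← Matrix.mul_one (of ψ)ᵀᴴ, conjTranspose_mul_mul_apply, one_mulVec]
  rfl

lemma mul_re_sum_dotProduct_mulVec_eq (M : ι → Matrix (Fin d) (Fin d) ℂ) (c : ℝ) :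
    c * (∑ i, star (ψ i) ⬝ᵥ ((∑ S ∈ s i, M S) *ᵥ ψ i)).re =
      (∑ i, (∑ S ∈ s i, c • ((of ψ)ᵀᴴ * M S * (of ψ)ᵀ)) i i).re := by
  simp only [← Finset.smul_sum, ← Matrix.mul_sum, ← Matrix.sum_mul, Matrix.smul_apply,
    conjTranspose_mul_mul_apply, Complex.re_sum, Complex.smul_re, Finset.mul_sum, smul_eq_mul]
  rfl

variable [Fintype ι]

theorem exists_gram_family_of_povm {M : ι → Matrix (Fin d) (Fin d) ℂ}
    (hM : ∀ S, (M S).PosSemidef) (hsum : ∑ S, M S = 1) :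
    ∃ W : ι → Matrix (Fin n) (Fin n) ℂ, (∀ S, (W S).PosSemidef) ∧
      ∑ S, W S = (n : ℂ)⁻¹ • gramMatrix ψ ∧
      (∑ i, (∑ S ∈ s i, W S) i i).re =
        1 / (n : ℝ) * (∑ i, star (ψ i) ⬝ᵥ ((∑ S ∈ s i, M S) *ᵥ ψ i)).re := by
  refine ⟨fun S => (1 / n : ℝ) • ((of ψ)ᵀᴴ * M S * (of ψ)ᵀ), fun S => ?_, ?_,
    (mul_re_sum_dotProduct_mulVec_eq ψ s M _).symm⟩
  · exact ((hM S).conjTranspose_mul_mul_same _).smul (by positivity)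
  · rw [← Finset.smul_sum, ← Matrix.sum_mul, ← Matrix.mul_sum, hsum, Matrix.mul_one,
      gramMatrix_eq_conjTranspose_mul, RCLike.real_smul_eq_coe_smul (K := ℂ)]
    norm_num

theorem exists_povm_of_gram_family [Nonempty ι] (hn : 0 < n) {W : ι → Matrix (Fin n) (Fin n) ℂ}
    (hW : ∀ S, (W S).PosSemidef) (hsum : ∑ S, W S = (n : ℂ)⁻¹ • gramMatrix ψ) :
    ∃ M : ι → Matrix (Fin d) (Fin d) ℂ, (∀ S, (M S).PosSemidef) ∧ ∑ S, M S = 1 ∧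
      1 / (n : ℝ) * (∑ i, star (ψ i) ⬝ᵥ ((∑ S ∈ s i, M S) *ᵥ ψ i)).re =
        (∑ i, (∑ S ∈ s i, W S) i i).re := by
  have hn' : (n : ℝ) ≠ 0 := by positivity
  obtain ⟨M, hM, hMsum, hAMA⟩ := exists_posSemidef_sum_eq_one_conjTranspose_mul_mul_eq (of ψ)ᵀ
    (W := fun S => (n : ℝ) • W S) (fun S => (hW S).smul (by positivity)) (by
      rw [← Finset.smul_sum, hsum, gramMatrix_eq_conjTranspose_mul,
        RCLike.real_smul_eq_coe_smul (K := ℂ), smul_smul]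
      simp [hn.ne'])
  refine ⟨M, hM, hMsum, ?_⟩
  simp only [mul_re_sum_dotProduct_mulVec_eq, hAMA, smul_smul, one_div, inv_mul_cancel₀ hn',
    one_smul]

end Gram

theorem sdp_povm_eq_sdp_gram_general (k n d : ℕ) (hn : 0 < n)
    (hkn : k ≤ n) (ψ : Fin n → (Fin d → ℂ)) :
    ∃ α : ℝ,
      IsLeast
        {t : ℝ | ∃ M : {S : Finset (Fin n) // S.card = k} → Matrix (Fin d) (Fin d) ℂ,
          (∀ S, (M S).PosSemidef) ∧ (∑ S, M S) = 1 ∧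
          t = (1 / (n : ℝ)) *
            (∑ i, star (ψ i) ⬝ᵥ
              ((∑ S ∈ Finset.univ.filter fun S : {S : Finset (Fin n) // S.card = k} =>
                  i ∉ S.val, M S) *ᵥ ψ i)).re} α ∧
      IsLeast
        {t : ℝ | ∃ W : {S : Finset (Fin n) // S.card = k} → Matrix (Fin n) (Fin n) ℂ,
          (∀ S, (W S).PosSemidef) ∧ (∑ S, W S) = ((n : ℂ))⁻¹ • gramMatrix ψ ∧
          t = (∑ i,
            (∑ S ∈ Finset.univ.filter fun S : {S : Finset (Fin n) // S.card = k} =>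
                i ∉ S.val, W S) i i).re} α := by
  classical
  have : Nonempty {S : Finset (Fin n) // S.card = k} := by
    obtain ⟨S, hS⟩ := powersetCard_nonempty.mpr ((card_fin n).symm ▸ hkn : k ≤ #(univ : Finset _))
    exact ⟨⟨S, (mem_powersetCard.mp hS).2⟩⟩
  set s := fun i : Fin n => univ.filter fun S : {S : Finset (Fin n) // S.card = k} => i ∉ S.val
  obtain ⟨M₀, ⟨hM₀, hM₀sum⟩, hmin⟩ := isCompact_setOf_posSemidef_sum_eq_one.exists_isMinOn
    exists_posSemidef_sum_eq_one
    (Continuous.continuousOn (f := fun M : _ → Matrix (Fin d) (Fin d) ℂ =>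
      1 / (n : ℝ) * (∑ i, star (ψ i) ⬝ᵥ ((∑ S ∈ s i, M S) *ᵥ ψ i)).re) (by fun_prop))
  obtain ⟨W₀, hW₀, hW₀sum, hW₀val⟩ := exists_gram_family_of_povm ψ s hM₀ hM₀sum
  refine ⟨_, ⟨⟨M₀, hM₀, hM₀sum, rfl⟩, ?_⟩, ⟨⟨W₀, hW₀, hW₀sum, hW₀val.symm⟩, ?_⟩⟩
  · rintro t ⟨M, hM, hMsum, rfl⟩
    exact hmin ⟨hM, hMsum⟩
  · rintro t ⟨W, hW, hWsum, rfl⟩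
    obtain ⟨M, hM, hMsum, hval⟩ := exists_povm_of_gram_family ψ s hn hW hWsum
    exact hval ▸ hmin ⟨hM, hMsum⟩

/-- The POVM formulation of the average-error SDP and the Gram-matrix formulation have
the same optimal value, and both infima are attained. -/
theorem sdp_povm_eq_sdp_gram (k n d : ℕ) (hk : 0 < k) (hn : 0 < n) (hd : 0 < d)
    (hkn : k ≤ n) (ψ : Fin n → (Fin d → ℂ)) :
    ∃ α : ℝ,
      IsLeast
        {t : ℝ | ∃ M : {S : Finset (Fin n) // S.card = k} → Matrix (Fin d) (Fin d) ℂ,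
          (∀ S, (M S).PosSemidef) ∧ (∑ S, M S) = 1 ∧
          t = (1 / (n : ℝ)) *
            (∑ i, star (ψ i) ⬝ᵥ
              ((∑ S ∈ Finset.univ.filter fun S : {S : Finset (Fin n) // S.card = k} =>
                  i ∉ S.val, M S) *ᵥ ψ i)).re} α ∧
      IsLeast
        {t : ℝ | ∃ W : {S : Finset (Fin n) // S.card = k} → Matrix (Fin n) (Fin n) ℂ,
          (∀ S, (W S).PosSemidef) ∧ (∑ S, W S) = ((n : ℂ))⁻¹ • gramMatrix ψ ∧
          t = (∑ i,
            (∑ S ∈ Finset.univ.filter fun S : {S : Finset (Fin n) // S.card = k} =>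
                i ∉ S.val, W S) i i).re} α :=
  sdp_povm_eq_sdp_gram_general k n d hn hkn ψ
end
end

section
/- Let k, n, d be positive integers with k ≤ n. An indexed list of (possibly subnormalized) pure quantum states ψ_1, …, ψ_n ∈ ℂ^d is k-learnable if and only if its Gram matrix G (with G_{ij} = ⟨ψ_i, ψ_j⟩) is k-incoherent. -/
open Matrix BigOperators Finset ComplexOrder

noncomputable section

/-!
Write `Ψ` for the `d × n` matrix with columns `ψᵢ`, so that `gramMatrix ψ = Ψᴴ Ψ` and
`⟨ψᵢ, M ψⱼ⟩ = (Ψᴴ M Ψ)ᵢⱼ`.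

If `(M_S)` is a learning POVM, then `G = ∑_S Ψᴴ M_S Ψ`, and each summand is positive semidefinite
with zero diagonal outside `S`; in any decomposition of it into rank-one terms `w wᴴ`, every `w` is
therefore supported in `S`.

Conversely, write `G = ∑ₗ vₗ vₗᴴ = Bᴴ B`, where `B` has the rows `vₗᴴ`. From `Ψᴴ Ψ = Bᴴ B` and the
Moore–Penrose inverse `G⁺`, the matrix `C = B G⁺ Ψᴴ` satisfies `C Ψ = B`, and `Cᴴ C = Ψ G⁺ Ψᴴ` is a
projection, so `Cᴴ C ≤ 1`. The rank-one effects `cₗᴴ cₗ` of the rows of `C`, together with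
`1 - Cᴴ C`, form a POVM: outcome `l` has probability `|vₗ i|²` on `ψᵢ`, and `1 - Cᴴ C` has
probability `0` on every `ψᵢ`. Labelling outcome `l` by a `k`-set containing the support of `vₗ`
and coarse-graining yields a `k`-learning POVM.
-/

namespace Matrix

variable {𝕜 : Type*} [RCLike 𝕜] {m n d : Type*} [Fintype m] [Fintype n] [Fintype d]

omit [Fintype n] in
lemma star_dotProduct_mulVec_eq_conjTranspose_mul_mul_apply (ψ : n → d → 𝕜)
    (N : Matrix d d 𝕜) (i j : n) :
    star (ψ i) ⬝ᵥ (N *ᵥ ψ j) = ((of ψ)ᵀᴴ * N * (of ψ)ᵀ) i j := by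
  simp only [mul_apply, dotProduct, mulVec, Finset.mul_sum, Finset.sum_mul]
  rw [Finset.sum_comm]
  simp [mul_assoc]

lemma star_dotProduct_vecMulVec_mulVec (c x : d → 𝕜) :
    star x ⬝ᵥ (vecMulVec (star c) c *ᵥ x) = star (c ⬝ᵥ x) * (c ⬝ᵥ x) := by
  rw [vecMulVec_mulVec, dotProduct_smul, op_smul_eq_mul, ← star_dotProduct_star]

omit [Fintype n] in
lemma conjTranspose_mul_self_eq_sum_vecMulVec (B : Matrix m n 𝕜) :
    Bᴴ * B = ∑ r, vecMulVec (star (B r)) (B r) := by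
  ext i j
  simp [mul_apply, sum_apply, vecMulVec_apply]

section PseudoInverse

variable [DecidableEq n] {G : Matrix n n 𝕜}

lemma IsHermitian.continuousOn_spectrum (hG : G.IsHermitian) (f : ℝ → ℝ) :
    ContinuousOn f (spectrum ℝ G) :=
  Set.Finite.continuousOn (hG.spectrum_real_eq_range_eigenvalues ▸ Set.finite_range _) f

/-- Since `0⁻¹ = 0` in `ℝ`, `cfc (·⁻¹)` inverts the nonzero eigenvalues and keeps the zero ones:
it is the Moore–Penrose inverse of `G`. -/
lemma IsHermitian.exists_isHermitian_mul_mul_eq (hG : G.IsHermitian) :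
    ∃ H : Matrix n n 𝕜, H.IsHermitian ∧ G * H * G = G ∧ H * G * H = H := by
  have hc := hG.continuousOn_spectrum
  have hG' : IsSelfAdjoint G := hG
  refine ⟨cfc (·⁻¹ : ℝ → ℝ) G, cfc_predicate _ _, ?_, ?_⟩
  · calc G * cfc (·⁻¹ : ℝ → ℝ) G * G = cfc (fun x : ℝ => x * x⁻¹ * x) G := by
          rw [cfc_mul (fun x : ℝ => x * x⁻¹) (fun x => x) G (hc _) (hc _),
            cfc_mul (fun x : ℝ => x) (·⁻¹) G (hc _) (hc _), cfc_id' ℝ G]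
      _ = G := by simp only [mul_inv_mul_cancel, cfc_id' ℝ G]
  · calc cfc (·⁻¹ : ℝ → ℝ) G * G * cfc (·⁻¹ : ℝ → ℝ) G
          = cfc (fun x : ℝ => x⁻¹ * x * x⁻¹) G := by
          rw [cfc_mul (fun x : ℝ => x⁻¹ * x) (·⁻¹) G (hc _) (hc _),
            cfc_mul (·⁻¹ : ℝ → ℝ) (fun x => x) G (hc _) (hc _), cfc_id' ℝ G]
      _ = cfc (·⁻¹ : ℝ → ℝ) G := by
          congr 1
          ext x
          simpa using mul_inv_mul_cancel x⁻¹

end PseudoInverse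

lemma posSemidef_one_sub_of_isStarProjection [DecidableEq d] {P : Matrix d d 𝕜}
    (hP : IsStarProjection P) : (1 - P).PosSemidef := by
  open scoped MatrixOrder in exact nonneg_iff_posSemidef.mp hP.one_sub_nonneg

lemma mul_mul_conjTranspose_mul_self_eq_self {B : Matrix m n 𝕜} {H : Matrix n n 𝕜}
    (hH : Bᴴ * B * H * (Bᴴ * B) = Bᴴ * B) : B * H * (Bᴴ * B) = B := by
  classical
  have hker : Bᴴ * B * (H * (Bᴴ * B) - 1) = 0 := by
    rw [Matrix.mul_sub, ← Matrix.mul_assoc, hH, Matrix.mul_one, sub_self]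
  have hX : B * H * (Bᴴ * B) - B = B * (H * (Bᴴ * B) - 1) := by
    rw [Matrix.mul_sub, Matrix.mul_one, Matrix.mul_assoc]
  rw [← sub_eq_zero, ← conjTranspose_mul_self_eq_zero, hX, conjTranspose_mul, Matrix.mul_assoc,
    ← Matrix.mul_assoc Bᴴ, hker, Matrix.mul_zero]

theorem exists_mul_eq_posSemidef_one_sub_of_conjTranspose_mul_self_eq [DecidableEq n]
    [DecidableEq d] (A : Matrix d n 𝕜) (B : Matrix m n 𝕜) (h : Aᴴ * A = Bᴴ * B) :
    ∃ C : Matrix m d 𝕜, C * A = B ∧ (1 - Cᴴ * C).PosSemidef := by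
  obtain ⟨H, hH, hGHG, hHGH⟩ := (isHermitian_conjTranspose_mul_self B).exists_isHermitian_mul_mul_eq
  refine ⟨B * H * Aᴴ, by rw [Matrix.mul_assoc, h, mul_mul_conjTranspose_mul_self_eq_self hGHG], ?_⟩
  have hCC : (B * H * Aᴴ)ᴴ * (B * H * Aᴴ) = A * H * Aᴴ := by
    conv_rhs => rw [← hHGH]
    simp only [conjTranspose_mul, conjTranspose_conjTranspose, hH.eq, Matrix.mul_assoc]
  refine hCC ▸ posSemidef_one_sub_of_isStarProjection ⟨?_, ?_⟩
  · change A * H * Aᴴ * (A * H * Aᴴ) = A * H * Aᴴ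
    conv_rhs => rw [← hHGH, ← h]
    simp only [Matrix.mul_assoc]
  · simp only [IsSelfAdjoint, star_eq_conjTranspose, conjTranspose_mul,
      conjTranspose_conjTranspose, hH.eq, Matrix.mul_assoc]

end Matrix

lemma gramMatrix_eq_conjTranspose_mul_self {n d : ℕ} (ψ : Fin n → Fin d → ℂ) :
    gramMatrix ψ = (of ψ)ᵀᴴ * (of ψ)ᵀ := by
  ext i j
  rw [← Matrix.mul_one (of ψ)ᵀᴴ, ← star_dotProduct_mulVec_eq_conjTranspose_mul_mul_apply,
    one_mulVec]
  rfl

lemma suppCard_le_card_of_forall_notMem {n : ℕ} {v : Fin n → ℂ} {S : Finset (Fin n)}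
    (h : ∀ i ∉ S, v i = 0) : suppCard v ≤ S.card :=
  card_le_card fun i hi => by
    by_contra hiS
    exact (mem_filter.mp hi).2 (h i hiS)

lemma exists_card_eq_forall_notMem_eq_zero {n k : ℕ} {v : Fin n → ℂ} (hv : suppCard v ≤ k)
    (hkn : k ≤ n) : ∃ S : Finset (Fin n), S.card = k ∧ ∀ i ∉ S, v i = 0 := by
  obtain ⟨S, hsub, -, hS⟩ :=
    exists_subsuperset_card_eq (subset_univ (univ.filter fun i => v i ≠ 0)) hv (by simpa using hkn)
  exact ⟨S, hS, fun i hi => by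
    by_contra h
    exact hi (hsub (by simpa using h))⟩

namespace KIncoherent

variable {n k : ℕ}

lemma zero : KIncoherent k (0 : Matrix (Fin n) (Fin n) ℂ) :=
  ⟨0, Fin.elim0, Fin.rec0, by simp⟩

lemma add {X Y : Matrix (Fin n) (Fin n) ℂ} (hX : KIncoherent k X) (hY : KIncoherent k Y) :
    KIncoherent k (X + Y) := by
  obtain ⟨m₁, v₁, hv₁, rfl⟩ := hX
  obtain ⟨m₂, v₂, hv₂, rfl⟩ := hY
  refine ⟨m₁ + m₂, Fin.append v₁ v₂, Fin.addCases (by simpa) (by simpa), ?_⟩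
  simp [Fin.sum_univ_add]

lemma sum {ι : Type*} {s : Finset ι} {X : ι → Matrix (Fin n) (Fin n) ℂ}
    (h : ∀ i ∈ s, KIncoherent k (X i)) : KIncoherent k (∑ i ∈ s, X i) :=
  sum_induction X (KIncoherent k) (fun _ _ => add) zero h

end KIncoherent

lemma kIncoherent_of_posSemidef_of_diag_eq_zero {n k : ℕ} {X : Matrix (Fin n) (Fin n) ℂ}
    (hX : X.PosSemidef) {S : Finset (Fin n)} (hS : S.card ≤ k) (h : ∀ i ∉ S, X i i = 0) :
    KIncoherent k X := by
  obtain ⟨m, w, rfl⟩ := posSemidef_iff_eq_sum_vecMulVec.mp hX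
  refine ⟨m, w, fun j => (suppCard_le_card_of_forall_notMem fun i hi => ?_).trans hS, rfl⟩
  have hii := h i hi
  simp only [Matrix.sum_apply, vecMulVec_apply, Pi.star_apply] at hii
  have := (Fintype.sum_eq_zero_iff_of_nonneg fun j => mul_star_self_nonneg (w j i)).mp hii
  simpa using congr_fun this j

lemma kLearnable_of_povm {n d k : ℕ} {ψ : Fin n → Fin d → ℂ} {ι : Type*} [Fintype ι]
    (N : ι → Matrix (Fin d) (Fin d) ℂ) (hN : ∀ j, (N j).PosSemidef) (hsum : ∑ j, N j = 1)
    (f : ι → {S : Finset (Fin n) // S.card = k})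
    (hf : ∀ j i, i ∉ (f j).val → star (ψ i) ⬝ᵥ (N j *ᵥ ψ i) = 0) : KLearnable k ψ := by
  classical
  refine ⟨fun S => ∑ j ∈ univ.filter (f · = S), N j, fun S => posSemidef_sum _ fun j _ => hN j,
    by rw [sum_fiberwise]; exact hsum, fun S i hi => ?_⟩
  rw [sum_mulVec, dotProduct_sum]
  exact sum_eq_zero fun j hj => hf j i ((mem_filter.mp hj).2 ▸ hi)

theorem kIncoherent_gramMatrix_of_kLearnable {n d k : ℕ} {ψ : Fin n → Fin d → ℂ}
    (h : KLearnable k ψ) : KIncoherent k (gramMatrix ψ) := by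
  obtain ⟨M, hM, hsum, hzero⟩ := h
  have hG : gramMatrix ψ = ∑ S, (of ψ)ᵀᴴ * M S * (of ψ)ᵀ := by
    rw [← Matrix.sum_mul, ← Matrix.mul_sum, hsum, Matrix.mul_one,
      gramMatrix_eq_conjTranspose_mul_self]
  rw [hG]
  refine KIncoherent.sum fun S _ => kIncoherent_of_posSemidef_of_diag_eq_zero
    ((hM S).conjTranspose_mul_mul_same _) S.2.le fun i hi => ?_
  rw [← star_dotProduct_mulVec_eq_conjTranspose_mul_mul_apply]
  exact hzero S i hi

theorem kLearnable_of_kIncoherent_gramMatrix {n d k : ℕ} {ψ : Fin n → Fin d → ℂ} (hkn : k ≤ n)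
    (h : KIncoherent k (gramMatrix ψ)) : KLearnable k ψ := by
  obtain ⟨m, v, hv, hG⟩ := h
  have hΨ : (of ψ)ᵀᴴ * (of ψ)ᵀ = (of (star v))ᴴ * of (star v) := by
    rw [← gramMatrix_eq_conjTranspose_mul_self, hG, conjTranspose_mul_self_eq_sum_vecMulVec]
    refine sum_congr rfl fun l _ => ?_
    change _ = vecMulVec (star (star (v l))) (star (v l))
    rw [star_star]
  obtain ⟨C, hCΨ, hC⟩ := exists_mul_eq_posSemidef_one_sub_of_conjTranspose_mul_self_eq _ _ hΨ
  choose S hS hvS using fun l => exists_card_eq_forall_notMem_eq_zero (hv l) hkn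
  obtain ⟨S₀, -, hS₀⟩ := exists_subset_card_eq (s := (univ : Finset (Fin n))) (by simpa using hkn)
  refine kLearnable_of_povm
    (fun j : Option (Fin m) => j.elim (1 - Cᴴ * C) fun l => vecMulVec (star (C l)) (C l)) ?_ ?_
    (fun j : Option (Fin m) => j.elim ⟨S₀, hS₀⟩ fun l => ⟨S l, hS l⟩) ?_
  · rintro (_ | l)
    exacts [hC, posSemidef_vecMulVec_star_self _]
  · simp [Fintype.sum_option, ← conjTranspose_mul_self_eq_sum_vecMulVec]
  · rintro (_ | l) i hi <;> dsimp only [Option.elim] at hi ⊢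
    · have hker : (of ψ)ᵀᴴ * (1 - Cᴴ * C) * (of ψ)ᵀ = 0 := by
        rw [Matrix.mul_sub, Matrix.sub_mul, Matrix.mul_one, hΨ, ← hCΨ, conjTranspose_mul]
        simp only [Matrix.mul_assoc, sub_self]
      rw [star_dotProduct_mulVec_eq_conjTranspose_mul_mul_apply, hker, Matrix.zero_apply]
    · have hCψ : C l ⬝ᵥ ψ i = star (v l i) := congr_fun (congr_fun hCΨ l) i
      rw [star_dotProduct_vecMulVec_mulVec, hCψ, hvS l i hi, star_zero, mul_zero]

theorem kLearnable_iff_gram_kIncoherent_general (k n d : ℕ)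
    (hkn : k ≤ n) (ψ : Fin n → (Fin d → ℂ)) :
    KLearnable k ψ ↔ KIncoherent k (gramMatrix ψ) :=
  ⟨kIncoherent_gramMatrix_of_kLearnable, kLearnable_of_kIncoherent_gramMatrix hkn⟩

/-- A list of pure states is `k`-learnable if and only if its Gram matrix is `k`-incoherent. -/
theorem kLearnable_iff_gram_kIncoherent (k n d : ℕ) (hk : 0 < k) (hn : 0 < n) (hd : 0 < d)
    (hkn : k ≤ n) (ψ : Fin n → (Fin d → ℂ)) :
    KLearnable k ψ ↔ KIncoherent k (gramMatrix ψ) :=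
  kLearnable_iff_gram_kIncoherent_general k n d hkn ψ
end
end

section
/- Let n, k be integers with 2 ≤ k ≤ n, let G be a simple undirected graph on n vertices containing a clique of size k, and let C ∈ ℂ^{n×n} be its adjacency matrix (with C_{ij} = 1 if {i,j} is an edge and C_{ij} = 0 otherwise). Then μ(k,C) := max{ Tr(C X) : X ∈ I_k } = k − 1. -/
open Matrix BigOperators Finset ComplexOrder

noncomputable section

/-! If `v` has at most `k` nonzero entries and `A` has zero diagonal and entries of norm at most
one (as the adjacency matrix `C` does), then
`Re ⟨v, A v⟩ ≤ ∑_{a ≠ b} |v_a| |v_b| = (∑ |v_a|)² - ∑ |v_a|² ≤ (k - 1) ‖v‖²`,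
the last step by Cauchy–Schwarz on the support of `v`. Summing over a decomposition
`X = ∑ vᵢ vᵢ*` gives `Re Tr(C X) ≤ (k - 1) Tr X ≤ k - 1`. Equality holds for `X = v v*` with `v`
the indicator vector of a `k`-clique scaled by `1/√k`, because the clique contributes `k(k - 1)`
ones to `C`. -/

section
variable {ι : Type*} [Fintype ι]

lemma re_dotProduct_star_self (v : ι → ℂ) : (v ⬝ᵥ star v).re = ∑ i, ‖v i‖ ^ 2 := by
  simp only [dotProduct, Pi.star_apply, Complex.star_def, Complex.re_sum, Complex.mul_conj,
    Complex.ofReal_re, Complex.normSq_eq_norm_sq]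

lemma sq_sum_le_card_mul_sum_sq_of_support_subset {f : ι → ℝ} {s : Finset ι}
    (hf : ∀ i ∉ s, f i = 0) : (∑ i, f i) ^ 2 ≤ #s * ∑ i, f i ^ 2 := by
  have hsum : ∀ g : ι → ℝ, (∀ i ∉ s, g i = 0) → ∑ i ∈ s, g i = ∑ i, g i := fun g hg =>
    Finset.sum_subset (subset_univ s) fun i _ hi => hg i hi
  rw [← hsum f hf, ← hsum (f · ^ 2) fun i hi => by simp [hf i hi]]
  exact sq_sum_le_card_mul_sum_sq

lemma re_mulVec_dotProduct_star_le {A : Matrix ι ι ℂ} (hdiag : ∀ i, A i i = 0)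
    (hA : ∀ i j, ‖A i j‖ ≤ 1) {v : ι → ℂ} {s : Finset ι} (hv : ∀ i ∉ s, v i = 0) :
    ((A *ᵥ v) ⬝ᵥ star v).re ≤ (#s - 1) * ∑ i, ‖v i‖ ^ 2 := by
  classical
  have hterm : ∀ a b, (A a b * v b * star (v a)).re
      ≤ ‖v a‖ * ‖v b‖ - if a = b then ‖v a‖ ^ 2 else 0 := by
    intro a b
    obtain rfl | hab := eq_or_ne a b
    · simp [hdiag, sq]
    · calc (A a b * v b * star (v a)).re ≤ ‖A a b * v b * star (v a)‖ := Complex.re_le_norm _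
        _ = ‖A a b‖ * (‖v a‖ * ‖v b‖) := by rw [norm_mul, norm_mul, norm_star]; ring
        _ ≤ ‖v a‖ * ‖v b‖ := mul_le_of_le_one_left (by positivity) (hA a b)
        _ = _ := by simp [hab]
  have hcs := sq_sum_le_card_mul_sum_sq_of_support_subset (f := fun i => ‖v i‖) (s := s)
    fun i hi => by simp [hv i hi]
  calc ((A *ᵥ v) ⬝ᵥ star v).re = ∑ a, ∑ b, (A a b * v b * star (v a)).re := by
        simp [dotProduct, mulVec, Finset.sum_mul, Complex.re_sum]
    _ ≤ ∑ a, ∑ b, (‖v a‖ * ‖v b‖ - if a = b then ‖v a‖ ^ 2 else 0) := by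
        gcongr with a _ b _
        exact hterm a b
    _ = (∑ i, ‖v i‖) ^ 2 - ∑ i, ‖v i‖ ^ 2 := by
        simp only [Finset.sum_sub_distrib, Finset.sum_ite_eq, Finset.mem_univ, if_true, sq,
          Finset.sum_mul_sum]
    _ ≤ (#s - 1) * ∑ i, ‖v i‖ ^ 2 := by linarith

lemma mulVec_dotProduct_star_ite [DecidableEq ι] (A : Matrix ι ι ℂ) (s : Finset ι) (c : ℂ) :
    (A *ᵥ fun i => if i ∈ s then c else 0) ⬝ᵥ star (fun i => if i ∈ s then c else 0) =
      c * star c * ∑ a ∈ s, ∑ b ∈ s, A a b := by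
  simp only [dotProduct, mulVec, apply_ite, mul_zero, Finset.sum_ite_mem, Finset.univ_inter,
    Pi.star_apply, star_zero, Finset.sum_mul, Finset.mul_sum]
  exact Finset.sum_congr rfl fun _ _ => Finset.sum_congr rfl fun _ _ => by ring

end

lemma KIncoherent.re_trace_mul_le {n k : ℕ} {A : Matrix (Fin n) (Fin n) ℂ}
    (hdiag : ∀ i, A i i = 0) (hA : ∀ i j, ‖A i j‖ ≤ 1) {X : Matrix (Fin n) (Fin n) ℂ}
    (hX : KIncoherent k X) : (A * X).trace.re ≤ (k - 1) * X.trace.re := by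
  obtain ⟨m, v, hv, rfl⟩ := hX
  simp only [Finset.mul_sum, trace_sum, Complex.re_sum]
  gcongr with i
  rw [mul_vecMulVec, trace_vecMulVec, trace_vecMulVec, re_dotProduct_star_self]
  calc _ ≤ ((suppCard (v i) : ℝ) - 1) * ∑ a, ‖v i a‖ ^ 2 :=
        re_mulVec_dotProduct_star_le hdiag hA fun a ha => by simpa [suppCard] using ha
    _ ≤ _ := by gcongr; exact_mod_cast hv i

lemma SimpleGraph.IsNClique.sum_sum_adjMatrix {V R : Type*} [Ring R] {G : SimpleGraph V}
    [DecidableRel G.Adj] {s : Finset V} {k : ℕ} (hs : G.IsNClique k s) :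
    ∑ a ∈ s, ∑ b ∈ s, G.adjMatrix R a b = k * (k - 1 : R) := by
  classical
  have hrow : ∀ a ∈ s, ∑ b ∈ s, G.adjMatrix R a b = k - 1 := by
    intro a ha
    have hadj : s.filter (G.Adj a) = s.erase a := by
      ext b
      simp only [Finset.mem_filter, Finset.mem_erase]
      exact ⟨fun ⟨hb, hab⟩ => ⟨(G.ne_of_adj hab).symm, hb⟩,
        fun ⟨hba, hb⟩ => ⟨hb, hs.isClique ha hb hba.symm⟩⟩
    have hcard : ((s.erase a).card : R) = k - 1 := by
      rw [Finset.card_erase_of_mem ha, hs.card_eq,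
        Nat.cast_pred (hs.card_eq ▸ Finset.card_pos.2 ⟨a, ha⟩)]
    simp [SimpleGraph.adjMatrix_apply, Finset.sum_boole, hadj, hcard]
  rw [Finset.sum_congr rfl hrow, Finset.sum_const, hs.card_eq, nsmul_eq_mul]

lemma SimpleGraph.IsNClique.exists_mem_Ik_re_trace_adjMatrix_mul_eq {n k : ℕ} (hk : k ≠ 0)
    {G : SimpleGraph (Fin n)} [DecidableRel G.Adj] {s : Finset (Fin n)} (hs : G.IsNClique k s) :
    ∃ X ∈ Ik n k, ((G.adjMatrix ℂ * X).trace).re = k - 1 := by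
  set c : ℂ := ((√(k : ℝ)⁻¹ : ℝ) : ℂ)
  set v : Fin n → ℂ := fun i => if i ∈ s then c else 0
  have hc : c * star c = (k : ℂ)⁻¹ := by
    rw [Complex.star_def, Complex.mul_conj, Complex.normSq_ofReal,
      Real.mul_self_sqrt (by positivity)]
    push_cast; rfl
  have hk' : (k : ℂ) ≠ 0 := Nat.cast_ne_zero.2 hk
  refine ⟨vecMulVec v (star v), ⟨posSemidef_vecMulVec_self_star v,
    ⟨1, fun _ => v, fun _ => ?_, by simp⟩, ?_⟩, ?_⟩
  · rw [suppCard, ← hs.card_eq]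
    exact Finset.card_le_card fun i hi => by by_contra h; simp [v, h] at hi
  · rw [trace_vecMulVec]
    nth_rw 1 [← one_mulVec v]
    rw [mulVec_dotProduct_star_ite, hc]
    simp [one_apply, hs.card_eq, hk']
  · rw [mul_vecMulVec, trace_vecMulVec, mulVec_dotProduct_star_ite, hc, hs.sum_sum_adjMatrix,
      inv_mul_cancel_left₀ hk']
    simp

theorem mu_eq_of_clique_general (n k : ℕ) (hk : 2 ≤ k)
    (G : SimpleGraph (Fin n)) [DecidableRel G.Adj]
    (hclique : ∃ s : Finset (Fin n), G.IsNClique k s) :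
    IsGreatest {t : ℝ | ∃ X ∈ Ik n k, t = ((G.adjMatrix ℂ * X).trace).re}
      ((k : ℝ) - 1) := by
  have hdiag : ∀ i, G.adjMatrix ℂ i i = 0 := fun i => by simp
  have hA : ∀ i j, ‖G.adjMatrix ℂ i j‖ ≤ 1 := fun i j => by
    rw [SimpleGraph.adjMatrix_apply]; split_ifs <;> simp
  refine ⟨?_, ?_⟩
  · obtain ⟨s, hs⟩ := hclique
    obtain ⟨X, hX, hval⟩ := hs.exists_mem_Ik_re_trace_adjMatrix_mul_eq (by omega)
    exact ⟨X, hX, hval.symm⟩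
  · rintro t ⟨X, ⟨-, hX, htr⟩, rfl⟩
    have hk1 : (1 : ℝ) ≤ k := by exact_mod_cast one_le_two.trans hk
    calc _ ≤ (k - 1) * X.trace.re := hX.re_trace_mul_le hdiag hA
      _ ≤ k - 1 := mul_le_of_le_one_right (by linarith) htr

/-- If a graph on `n` vertices contains a `k`-clique, then the maximum of `Tr(C X)` over
`X ∈ I_k`, where `C` is the adjacency matrix, equals `k - 1` (and is attained). -/
theorem mu_eq_of_clique (n k : ℕ) (hk : 2 ≤ k) (hkn : k ≤ n)
    (G : SimpleGraph (Fin n)) [DecidableRel G.Adj]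
    (hclique : ∃ s : Finset (Fin n), G.IsNClique k s) :
    IsGreatest {t : ℝ | ∃ X ∈ Ik n k, t = ((G.adjMatrix ℂ * X).trace).re}
      ((k : ℝ) - 1) :=
  mu_eq_of_clique_general n k hk G hclique
end
end

section
/- Let n, k be integers with 2 ≤ k ≤ n, let G be a simple undirected graph on n vertices containing no clique of size k, and let C ∈ ℂ^{n×n} be its adjacency matrix. Then μ(k,C) := max{ Tr(C X) : X ∈ I_k } ≤ sqrt((k−1)^2 − 2 + 2/k). -/
open Matrix BigOperators Finset ComplexOrder

noncomputable section

/-!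
Write `X = ∑ₗ vₗ vₗ*` with each `vₗ` supported on a set `S` of at most `k` vertices; then
`Re (vₗ* C vₗ) ≤ ∑ |vᵢ| |vⱼ|` over the ordered adjacent pairs `(i, j)` of `S`. As `S` is not a
`k`-clique, there are at most `k (k - 1) - 2 = (k - 2)(k + 1)` such pairs, so Cauchy–Schwarz bounds
the square of this sum by `(k - 2)(k + 1) ∑_{i ≠ j ∈ S} |vᵢ|² |vⱼ|²`, and
`∑_{i ≠ j ∈ S} |vᵢ|² |vⱼ|² = ‖v‖⁴ - ∑ |vᵢ|⁴ ≤ (1 - 1/k) ‖v‖⁴` by Cauchy–Schwarz again. Finally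
`(k - 2)(k + 1)(1 - 1/k) = (k - 1)² - 2 + 2/k`, and summing over `l` uses `Tr X ≤ 1`.
-/

theorem Finset.sum_offDiag_mul {α R : Type*} [CommRing R] (s : Finset α) (f : α → R) :
    ∑ p ∈ s.offDiag, f p.1 * f p.2 = (∑ i ∈ s, f i) ^ 2 - ∑ i ∈ s, f i ^ 2 := by
  classical
  have h := sum_union (disjoint_diag_offDiag s) (f := fun p => f p.1 * f p.2)
  rw [diag_union_offDiag, sum_product, sum_diag] at h
  rw [sq, sum_mul_sum, h]
  simp only [sq, add_sub_cancel_left]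

theorem sq_sum_mul_le_of_subset_offDiag {α : Type*} {s : Finset α}
    {P : Finset (α × α)} (hP : P ⊆ s.offDiag) {k : ℕ} (hs : #s ≤ k) (x : α → ℝ) :
    k * (∑ p ∈ P, x p.1 * x p.2) ^ 2 ≤ #P * (k - 1) * (∑ i ∈ s, x i ^ 2) ^ 2 := by
  set t := ∑ i ∈ s, x i ^ 2
  set d := ∑ i ∈ s, (x i ^ 2) ^ 2
  have hpairs : ∑ p ∈ P, (x p.1 * x p.2) ^ 2 ≤ t ^ 2 - d :=
    calc ∑ p ∈ P, (x p.1 * x p.2) ^ 2 ≤ ∑ p ∈ s.offDiag, x p.1 ^ 2 * x p.2 ^ 2 := by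
          simp only [mul_pow]
          exact sum_le_sum_of_subset_of_nonneg hP fun p _ _ => by positivity
      _ = t ^ 2 - d := sum_offDiag_mul s (fun i => x i ^ 2)
  have hdiag : t ^ 2 ≤ k * d :=
    sq_sum_le_card_mul_sum_sq.trans (by gcongr)
  calc (k : ℝ) * (∑ p ∈ P, x p.1 * x p.2) ^ 2
      ≤ k * (#P * ∑ p ∈ P, (x p.1 * x p.2) ^ 2) := by gcongr; exact sq_sum_le_card_mul_sum_sq
    _ ≤ #P * (k * (t ^ 2 - d)) := by rw [mul_left_comm]; gcongr
    _ ≤ #P * ((k - 1) * t ^ 2) := mul_le_mul_of_nonneg_left (by linarith) (Nat.cast_nonneg _)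
    _ = #P * (k - 1) * t ^ 2 := by ring

theorem Matrix.re_trace_vecMulVec_star_self {V : Type*} [Fintype V] (v : V → ℂ) :
    (vecMulVec v (star v)).trace.re = ∑ i, ‖v i‖ ^ 2 := by
  simp only [trace_vecMulVec, dotProduct, Pi.star_apply, RCLike.star_def, Complex.mul_conj',
    Complex.re_sum]
  norm_cast

namespace SimpleGraph

variable {V : Type*} (G : SimpleGraph V) [DecidableRel G.Adj]

def adjPairs (s : Finset V) : Finset (V × V) := {p ∈ s ×ˢ s | G.Adj p.1 p.2}

theorem adjPairs_subset_offDiag (s : Finset V) : G.adjPairs s ⊆ s.offDiag := fun p hp => by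
  simp only [adjPairs, mem_filter, mem_product] at hp
  exact mem_offDiag.2 ⟨hp.1.1, hp.1.2, hp.2.ne⟩

variable {G}

theorem card_adjPairs_le {k : ℕ} (hk : 2 ≤ k) (hG : G.CliqueFree k) {s : Finset V}
    (hs : #s ≤ k) : #(G.adjPairs s) ≤ (k - 2) * (k + 1) := by
  classical
  have hoff := card_le_card (G.adjPairs_subset_offDiag s)
  rw [offDiag_card] at hoff
  obtain ⟨j, rfl⟩ := Nat.exists_eq_add_of_le' hk
  rw [Nat.add_sub_cancel]
  by_cases hcl : G.IsClique (s : Set V)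
  · have hlt : #s < j + 2 := lt_of_le_of_ne hs fun h => hG s ⟨hcl, h⟩
    have h1 : #s * #s ≤ #s * j + #s := by
      rw [← Nat.mul_succ]; exact Nat.mul_le_mul_left _ (by omega)
    have h2 : #s * j ≤ j * (j + 2 + 1) := by
      rw [mul_comm]; exact Nat.mul_le_mul_left _ (by omega)
    omega
  · obtain ⟨⟨a, ha⟩, ⟨b, hb⟩, hab, hnadj⟩ := G.not_isClique_iff.1 hcl
    have hab : a ≠ b := fun h => hab (Subtype.ext h)
    have hsub : G.adjPairs s ⊆ s.offDiag \ {(a, b), (b, a)} := fun p hp => by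
      refine mem_sdiff.2 ⟨G.adjPairs_subset_offDiag s hp, ?_⟩
      simp only [adjPairs, mem_filter] at hp
      simp only [mem_insert, mem_singleton]
      rintro (rfl | rfl)
      · exact hnadj hp.2
      · exact hnadj hp.2.symm
    have hpair : {(a, b), (b, a)} ⊆ s.offDiag := by
      simp [insert_subset_iff, mem_coe.1 ha, mem_coe.1 hb, hab, hab.symm]
    have hcard := card_le_card hsub
    rw [card_sdiff_of_subset hpair, offDiag_card, card_pair (by simp [hab])] at hcard
    have h1 : #s * #s ≤ #s * (j + 1) + #s := by
      rw [← Nat.mul_succ]; exact Nat.mul_le_mul_left _ (by omega)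
    have h2 : #s * (j + 1) ≤ j * (j + 2 + 1) + 2 := by nlinarith
    omega

theorem sum_adjPairs_mul_le {k : ℕ} (hk : 2 ≤ k) (hG : G.CliqueFree k) {s : Finset V}
    (hs : #s ≤ k) (x : V → ℝ) :
    ∑ p ∈ G.adjPairs s, x p.1 * x p.2 ≤ √((k - 1) ^ 2 - 2 + 2 / k) * ∑ i ∈ s, x i ^ 2 := by
  set Q := ∑ p ∈ G.adjPairs s, x p.1 * x p.2
  set t := ∑ i ∈ s, x i ^ 2
  have hk2 : (2 : ℝ) ≤ k := by exact_mod_cast hk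
  have hcard : (#(G.adjPairs s) : ℝ) ≤ (k - 2) * (k + 1) := by
    have := card_adjPairs_le hk hG hs
    rw [← Nat.cast_le (α := ℝ), Nat.cast_mul, Nat.cast_sub hk] at this
    simpa using this
  have hQ : Q ^ 2 ≤ ((k - 1) ^ 2 - 2 + 2 / k) * t ^ 2 := by
    refine le_of_mul_le_mul_left ?_ (by linarith : (0 : ℝ) < k)
    calc k * Q ^ 2 ≤ #(G.adjPairs s) * (k - 1) * t ^ 2 :=
          sq_sum_mul_le_of_subset_offDiag (G.adjPairs_subset_offDiag s) hs x
      _ ≤ (k - 2) * (k + 1) * (k - 1) * t ^ 2 := by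
          gcongr
          linarith
      _ = k * (((k - 1) ^ 2 - 2 + 2 / k) * t ^ 2) := by field_simp; ring
  calc Q ≤ |Q| := le_abs_self Q
    _ ≤ √(((k - 1) ^ 2 - 2 + 2 / k) * t ^ 2) := Real.abs_le_sqrt hQ
    _ = √((k - 1) ^ 2 - 2 + 2 / k) * t := by
      rw [Real.sqrt_mul' _ (sq_nonneg t), Real.sqrt_sq (sum_nonneg fun i _ => sq_nonneg (x i))]

theorem re_trace_adjMatrix_mul_vecMulVec_le [Fintype V] {s : Finset V} {v : V → ℂ}
    (hv : ∀ i ∉ s, v i = 0) :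
    (G.adjMatrix ℂ * vecMulVec v (star v)).trace.re ≤ ∑ p ∈ G.adjPairs s, ‖v p.1‖ * ‖v p.2‖ := by
  classical
  have htrace : (G.adjMatrix ℂ * vecMulVec v (star v)).trace
      = ∑ i, ∑ j, G.adjMatrix ℂ i j * (v j * star (v i)) := by
    simp [trace, mul_apply, vecMulVec_apply]
  have hterm : ∀ i j, (G.adjMatrix ℂ i j * (v j * star (v i))).re
      ≤ if (i, j) ∈ G.adjPairs s then ‖v i‖ * ‖v j‖ else 0 := fun i j => by
    by_cases hij : (i, j) ∈ G.adjPairs s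
    · rw [if_pos hij]
      simp only [adjPairs, mem_filter] at hij
      refine (Complex.re_le_norm _).trans_eq ?_
      simp [hij.2, mul_comm]
    · rw [if_neg hij]
      simp only [adjPairs, mem_filter, mem_product, not_and] at hij
      by_cases hi : i ∈ s
      · by_cases hj : j ∈ s
        · simp [hij ⟨hi, hj⟩]
        · simp [hv j hj]
      · simp [hv i hi]
  calc (G.adjMatrix ℂ * vecMulVec v (star v)).trace.re
      ≤ ∑ i, ∑ j, if (i, j) ∈ G.adjPairs s then ‖v i‖ * ‖v j‖ else 0 := by
        simp only [htrace, Complex.re_sum]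
        exact sum_le_sum fun i _ => sum_le_sum fun j _ => hterm i j
    _ = ∑ p ∈ G.adjPairs s, ‖v p.1‖ * ‖v p.2‖ := by
        rw [← Fintype.sum_prod_type', sum_ite_mem, univ_inter]

theorem re_trace_adjMatrix_mul_vecMulVec_le_of_card_le [Fintype V] {k : ℕ} (hk : 2 ≤ k)
    (hG : G.CliqueFree k) {v : V → ℂ} (hv : #{i | v i ≠ 0} ≤ k) :
    (G.adjMatrix ℂ * vecMulVec v (star v)).trace.re
      ≤ √((k - 1) ^ 2 - 2 + 2 / k) * (vecMulVec v (star v)).trace.re := by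
  set s : Finset V := {i | v i ≠ 0}
  have hvs : ∀ i ∉ s, v i = 0 := fun i hi => by simpa [s] using hi
  calc (G.adjMatrix ℂ * vecMulVec v (star v)).trace.re
      ≤ ∑ p ∈ G.adjPairs s, ‖v p.1‖ * ‖v p.2‖ := re_trace_adjMatrix_mul_vecMulVec_le hvs
    _ ≤ √((k - 1) ^ 2 - 2 + 2 / k) * ∑ i ∈ s, ‖v i‖ ^ 2 :=
        sum_adjPairs_mul_le hk hG hv fun i => ‖v i‖
    _ = √((k - 1) ^ 2 - 2 + 2 / k) * (vecMulVec v (star v)).trace.re := by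
      rw [re_trace_vecMulVec_star_self, sum_subset (subset_univ s) fun i _ hi => by simp [hvs i hi]]

end SimpleGraph

theorem mu_le_of_no_clique_general (n k : ℕ) (hk : 2 ≤ k)
    (G : SimpleGraph (Fin n)) [DecidableRel G.Adj]
    (hclique : ¬ ∃ s : Finset (Fin n), G.IsNClique k s) :
    ∀ X ∈ Ik n k, ((G.adjMatrix ℂ * X).trace).re ≤
      Real.sqrt (((k : ℝ) - 1) ^ 2 - 2 + 2 / (k : ℝ)) := by
  rintro X ⟨-, ⟨m, v, hv, rfl⟩, htr⟩
  have hG : G.CliqueFree k := fun s hs => hclique ⟨s, hs⟩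
  simp only [Finset.mul_sum, trace_sum, Complex.re_sum] at htr ⊢
  calc ∑ l, (G.adjMatrix ℂ * vecMulVec (v l) (star (v l))).trace.re
      ≤ ∑ l, √((k - 1) ^ 2 - 2 + 2 / k) * (vecMulVec (v l) (star (v l))).trace.re :=
        sum_le_sum fun l _ => G.re_trace_adjMatrix_mul_vecMulVec_le_of_card_le hk hG (hv l)
    _ = √((k - 1) ^ 2 - 2 + 2 / k) * ∑ l, (vecMulVec (v l) (star (v l))).trace.re :=
        (mul_sum _ _ _).symm
    _ ≤ √((k - 1) ^ 2 - 2 + 2 / k) := mul_le_of_le_one_right (Real.sqrt_nonneg _) htr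

/-- If a graph on `n` vertices contains no `k`-clique, then `Tr(C X) ≤ sqrt((k-1)² - 2 + 2/k)`
for every `X ∈ I_k`, where `C` is the adjacency matrix. -/
theorem mu_le_of_no_clique (n k : ℕ) (hk : 2 ≤ k) (hkn : k ≤ n)
    (G : SimpleGraph (Fin n)) [DecidableRel G.Adj]
    (hclique : ¬ ∃ s : Finset (Fin n), G.IsNClique k s) :
    ∀ X ∈ Ik n k, ((G.adjMatrix ℂ * X).trace).re ≤
      Real.sqrt (((k : ℝ) - 1) ^ 2 - 2 + 2 / (k : ℝ)) :=
  mu_le_of_no_clique_general n k hk G hclique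
end
end

section
/- Let n ≥ 2 and let G be a simple undirected graph on n vertices with adjacency matrix C ∈ ℂ^{n×n}. For every integer k with 2 ≤ k ≤ n, the graph G contains a clique of size k if and only if μ(k,C) := max{ Tr(C X) : X ∈ I_k } ≥ k − 1; moreover, if G contains no clique of size k then μ(k,C) ≤ k − 1 − 1/k. -/
open Matrix BigOperators Finset ComplexOrder

noncomputable section

/-!
Writing `X = ∑ vᵢ vᵢ*`, one has `Re Tr(C vv*) ≤ ∑_{ab} C_ab |v_a| |v_b|`, so everything reduces to
bounding the quadratic form of `C` on a nonnegative vector `w` supported on a `k`-set `s`.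
Since `C` plus the adjacency matrix of the complementary graph is `J - I`, that form is
`(∑ w)² - ∑ w²` minus the (nonnegative) form of the complement: at most `(k - 1) ∑ w²` by
Cauchy–Schwarz, and if `s` is not a clique, so contains a non-edge `pq`, at most
`(∑ w)² - ∑ w² - 2 w_p w_q ≤ (k - 1 - 1/k) ∑ w²`. Conversely, the uniform unit vector on a
`k`-clique attains `k - 1`.
-/

theorem two_mul_add_mul_add_sq_sub_le {a b r W K : ℝ} (hK : 2 ≤ K) (hW : 0 ≤ W)
    (hr : r ^ 2 ≤ (K - 2) * W) :
    2 * (a + b) * r + r ^ 2 - W ≤ (K - 1 - 1 / K) * (a ^ 2 + b ^ 2 + W) := by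
  have hK0 : 0 < K := by linarith
  rw [← sub_nonneg]
  -- AM-GM `2 (a + b) r ≤ t (a + b)² + r² / t` at `t = (K² - K - 1) / (2K)`, denominators cleared
  have key : 2 * K * (K ^ 2 - K - 1) *
        ((K - 1 - 1 / K) * (a ^ 2 + b ^ 2 + W) - (2 * (a + b) * r + r ^ 2 - W)) =
      ((K ^ 2 - K - 1) * (a + b) - 2 * K * r) ^ 2 + (K ^ 2 - K - 1) ^ 2 * (a - b) ^ 2 +
        2 * K * (K ^ 2 + K - 1) * ((K - 2) * W - r ^ 2) + 2 * (K ^ 2 - K + 1) * W := by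
    field_simp
    ring
  refine nonneg_of_mul_nonneg_right (a := 2 * K * (K ^ 2 - K - 1)) ?_ (by nlinarith)
  have : 0 ≤ K ^ 2 + K - 1 := by nlinarith
  have : 0 ≤ K ^ 2 - K + 1 := by nlinarith
  have : 0 ≤ (K - 2) * W - r ^ 2 := by linarith
  rw [key]
  positivity

theorem one_div_le_sub_one_of_two_le {x : ℝ} (hx : 2 ≤ x) : 1 / x ≤ x - 1 := by
  rw [div_le_iff₀ (by linarith)]
  nlinarith

theorem sq_sum_le_card_mul_sum_sq_of_support_subset_s7 {ι : Type*} [Fintype ι] {s : Finset ι}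
    {w : ι → ℝ} (hw : ∀ a ∉ s, w a = 0) : (∑ a, w a) ^ 2 ≤ #s * ∑ a, w a ^ 2 := by
  rw [← sum_subset (subset_univ s) fun a _ ha => hw a ha,
    ← sum_subset (subset_univ s) fun a _ ha => by simp [hw a ha]]
  exact sq_sum_le_card_mul_sum_sq

section ComplexMatrix

variable {ι : Type*} [Fintype ι]

theorem re_trace_vecMulVec_star (v : ι → ℂ) :
    (vecMulVec v (star v)).trace.re = ∑ i, ‖v i‖ ^ 2 := by
  simp [trace_vecMulVec, dotProduct, Complex.mul_conj, Complex.normSq_eq_norm_sq,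
    -Complex.ofReal_pow]

theorem re_trace_mul_vecMulVec_star_le (M : Matrix ι ι ℂ) (v : ι → ℂ) :
    (M * vecMulVec v (star v)).trace.re ≤
      (fun i => ‖v i‖) ⬝ᵥ M.map norm *ᵥ fun i => ‖v i‖ := by
  rw [mul_vecMulVec, trace_vecMulVec, dotProduct_comm]
  calc (star v ⬝ᵥ M *ᵥ v).re ≤ ‖star v ⬝ᵥ M *ᵥ v‖ := Complex.re_le_norm _
    _ ≤ ∑ i, ‖v i‖ * ∑ j, ‖M i j‖ * ‖v j‖ := by
      refine (norm_sum_le _ _).trans (sum_le_sum fun i _ => ?_)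
      rw [Pi.star_apply, norm_mul, norm_star]
      refine mul_le_mul_of_nonneg_left ((norm_sum_le _ _).trans_eq ?_) (norm_nonneg _)
      simp_rw [norm_mul]
    _ = _ := rfl

end ComplexMatrix

theorem re_trace_mul_le_of_mem_Ik {n k : ℕ} (M : Matrix (Fin n) (Fin n) ℂ) {c : ℝ} (hc : 0 ≤ c)
    (hM : ∀ v : Fin n → ℂ, suppCard v ≤ k →
      (M * vecMulVec v (star v)).trace.re ≤ c * (vecMulVec v (star v)).trace.re)
    {X : Matrix (Fin n) (Fin n) ℂ} (hX : X ∈ Ik n k) : (M * X).trace.re ≤ c := by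
  obtain ⟨-, ⟨m, v, hv, rfl⟩, htr⟩ := hX
  simp only [mul_sum, trace_sum, Complex.re_sum] at htr ⊢
  calc ∑ i, (M * vecMulVec (v i) (star (v i))).trace.re
      ≤ c * ∑ i, (vecMulVec (v i) (star (v i))).trace.re := by
        rw [mul_sum]; exact sum_le_sum fun i _ => hM (v i) (hv i)
    _ ≤ c := mul_le_of_le_one_right hc htr

namespace SimpleGraph

section

variable {V : Type*} [Fintype V] (G : SimpleGraph V) [DecidableRel G.Adj]

theorem dotProduct_adjMatrix_mulVec_nonneg {w : V → ℝ} (hw : 0 ≤ w) :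
    0 ≤ w ⬝ᵥ G.adjMatrix ℝ *ᵥ w := by
  rw [dotProduct_mulVec_adjMatrix]
  refine sum_nonneg fun a _ => sum_nonneg fun b _ => ?_
  split_ifs
  exacts [mul_nonneg (hw a) (hw b), le_rfl]

theorem two_mul_le_dotProduct_adjMatrix_mulVec {w : V → ℝ} (hw : 0 ≤ w) {p q : V}
    (hpq : G.Adj p q) : 2 * (w p * w q) ≤ w ⬝ᵥ G.adjMatrix ℝ *ᵥ w := by
  set f : V → V → ℝ := fun a b => if G.Adj a b then w a * w b else 0
  have hf : ∀ a b, 0 ≤ f a b := fun a b => by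
    simp only [f]; split_ifs
    exacts [mul_nonneg (hw a) (hw b), le_rfl]
  rw [dotProduct_mulVec_adjMatrix]
  calc 2 * (w p * w q) = f p q + f q p := by simp [f, hpq, hpq.symm, mul_comm]; ring
    _ ≤ ∑ b, f p b + ∑ b, f q b :=
      add_le_add (single_le_sum (fun b _ => hf p b) (mem_univ q))
        (single_le_sum (fun b _ => hf q b) (mem_univ p))
    _ ≤ ∑ a, ∑ b, f a b :=
      add_le_sum (fun a _ => sum_nonneg fun b _ => hf a b) (mem_univ p) (mem_univ q) hpq.ne

theorem re_trace_adjMatrix_mul_vecMulVec_star_le (v : V → ℂ) :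
    (G.adjMatrix ℂ * vecMulVec v (star v)).trace.re ≤
      (fun i => ‖v i‖) ⬝ᵥ G.adjMatrix ℝ *ᵥ fun i => ‖v i‖ := by
  convert re_trace_mul_vecMulVec_star_le (G.adjMatrix ℂ) v using 3
  ext i j
  simp [apply_ite]

theorem trace_adjMatrix_mul_vecMulVec_ofReal (w : V → ℝ) :
    (G.adjMatrix ℂ * vecMulVec (fun a => (w a : ℂ)) (star fun a => (w a : ℂ))).trace =
      (w ⬝ᵥ G.adjMatrix ℝ *ᵥ w : ℝ) := by
  rw [mul_vecMulVec, trace_vecMulVec, dotProduct_comm, dotProduct_mulVec_adjMatrix,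
    dotProduct_mulVec_adjMatrix]
  push_cast
  simp [apply_ite]

variable [DecidableEq V]

theorem dotProduct_adjMatrix_mulVec_add_compl (w : V → ℝ) :
    w ⬝ᵥ G.adjMatrix ℝ *ᵥ w + w ⬝ᵥ Gᶜ.adjMatrix ℝ *ᵥ w = (∑ a, w a) ^ 2 - ∑ a, w a ^ 2 := by
  rw [← dotProduct_add, ← add_mulVec,
    IsCompl.adjMatrix_add_adjMatrix_eq_adjMatrix_completeGraph ℝ isCompl_compl,
    dotProduct_mulVec_adjMatrix]
  simp [sq, sum_mul_sum, ← sum_sub_distrib, sum_ite, filter_ne, sum_erase_eq_sub]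

theorem dotProduct_compl_adjMatrix_mulVec_eq_zero {s : Finset V} (hs : G.IsClique (s : Set V))
    {w : V → ℝ} (hw : ∀ a ∉ s, w a = 0) : w ⬝ᵥ Gᶜ.adjMatrix ℝ *ᵥ w = 0 := by
  rw [dotProduct_mulVec_adjMatrix]
  refine sum_eq_zero fun a _ => sum_eq_zero fun b _ => ite_eq_right_iff.2 fun hab => ?_
  obtain ⟨hne, hnadj⟩ := (compl_adj G a b).1 hab
  by_contra h
  obtain ⟨ha0, hb0⟩ := mul_ne_zero_iff.1 h
  have ha : a ∈ s := by_contra fun h => ha0 (hw a h)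
  have hb : b ∈ s := by_contra fun h => hb0 (hw b h)
  exact hnadj (hs ha hb hne)

theorem dotProduct_adjMatrix_mulVec_le_card_sub_one {s : Finset V} {w : V → ℝ} (hw0 : 0 ≤ w)
    (hw : ∀ a ∉ s, w a = 0) : w ⬝ᵥ G.adjMatrix ℝ *ᵥ w ≤ (#s - 1) * ∑ a, w a ^ 2 := by
  have := G.dotProduct_adjMatrix_mulVec_add_compl w
  have := Gᶜ.dotProduct_adjMatrix_mulVec_nonneg hw0
  have := sq_sum_le_card_mul_sum_sq_of_support_subset_s7 hw
  linarith

theorem dotProduct_adjMatrix_mulVec_le_of_not_adj {s : Finset V} {w : V → ℝ} (hw0 : 0 ≤ w)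
    (hw : ∀ a ∉ s, w a = 0) {p q : V} (hp : p ∈ s) (hq : q ∈ s) (hpq : p ≠ q)
    (hnadj : ¬ G.Adj p q) :
    w ⬝ᵥ G.adjMatrix ℝ *ᵥ w ≤ (#s - 1 - 1 / #s) * ∑ a, w a ^ 2 := by
  have hq' : q ∈ s.erase p := mem_erase.2 ⟨hpq.symm, hq⟩
  set t := (s.erase p).erase q
  have hsum (f : V → ℝ) (hf : ∀ a ∉ s, f a = 0) : ∑ a, f a = f p + f q + ∑ a ∈ t, f a := by
    rw [← sum_subset (subset_univ s) fun a _ ha => hf a ha,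
      ← add_sum_erase s _ hp, ← add_sum_erase _ _ hq', add_assoc]
  have hsum₁ : ∑ a, w a = w p + w q + ∑ a ∈ t, w a := hsum w hw
  have hsum₂ : ∑ a, w a ^ 2 = w p ^ 2 + w q ^ 2 + ∑ a ∈ t, w a ^ 2 :=
    hsum _ fun a ha => by simp [hw a ha]
  have hs2 : 2 ≤ #s := one_lt_card.2 ⟨p, hp, q, hq, hpq⟩
  have hcard : (#t : ℝ) = #s - 2 := by
    rw [card_erase_of_mem hq', card_erase_of_mem hp, Nat.sub_sub, Nat.cast_sub hs2]
    rfl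
  have hcs : (∑ a ∈ t, w a) ^ 2 ≤ (#s - 2) * ∑ a ∈ t, w a ^ 2 := hcard ▸ sq_sum_le_card_mul_sum_sq
  have hcompl := Gᶜ.two_mul_le_dotProduct_adjMatrix_mulVec hw0 ((compl_adj G p q).2 ⟨hpq, hnadj⟩)
  have := G.dotProduct_adjMatrix_mulVec_add_compl w
  calc w ⬝ᵥ G.adjMatrix ℝ *ᵥ w ≤ (∑ a, w a) ^ 2 - ∑ a, w a ^ 2 - 2 * (w p * w q) := by linarith
    _ = 2 * (w p + w q) * ∑ a ∈ t, w a + (∑ a ∈ t, w a) ^ 2 - ∑ a ∈ t, w a ^ 2 := by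
      rw [hsum₁, hsum₂]; ring
    _ ≤ (#s - 1 - 1 / #s) * (w p ^ 2 + w q ^ 2 + ∑ a ∈ t, w a ^ 2) :=
      two_mul_add_mul_add_sq_sub_le (by exact_mod_cast hs2) (sum_nonneg fun a _ => sq_nonneg _) hcs
    _ = (#s - 1 - 1 / #s) * ∑ a, w a ^ 2 := by rw [hsum₂]

end

section

variable {n : ℕ} (G : SimpleGraph (Fin n)) [DecidableRel G.Adj]

theorem re_trace_adjMatrix_mul_le_of_mem_Ik {k : ℕ} (hkn : k ≤ n) {c : ℝ} (hc : 0 ≤ c)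
    (hG : ∀ s : Finset (Fin n), #s = k → ∀ w : Fin n → ℝ, 0 ≤ w → (∀ a ∉ s, w a = 0) →
      w ⬝ᵥ G.adjMatrix ℝ *ᵥ w ≤ c * ∑ a, w a ^ 2)
    {X : Matrix (Fin n) (Fin n) ℂ} (hX : X ∈ Ik n k) : (G.adjMatrix ℂ * X).trace.re ≤ c := by
  refine re_trace_mul_le_of_mem_Ik _ hc (fun v hv => ?_) hX
  obtain ⟨s, hsupp, hs⟩ := exists_superset_card_eq hv (by simpa using hkn)
  rw [re_trace_vecMulVec_star]
  refine (G.re_trace_adjMatrix_mul_vecMulVec_star_le v).trans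
    (hG s hs _ (fun a => norm_nonneg _) fun a ha => ?_)
  by_contra h
  exact ha (hsupp (by simpa using h))

theorem re_trace_adjMatrix_mul_le_sub_one {k : ℕ} (hk : 1 ≤ k) (hkn : k ≤ n)
    {X : Matrix (Fin n) (Fin n) ℂ} (hX : X ∈ Ik n k) : (G.adjMatrix ℂ * X).trace.re ≤ k - 1 :=
  G.re_trace_adjMatrix_mul_le_of_mem_Ik hkn (by simpa using hk)
    (fun s hs _ hw0 hw => hs ▸ G.dotProduct_adjMatrix_mulVec_le_card_sub_one hw0 hw) hX

variable {G} in
theorem CliqueFree.re_trace_adjMatrix_mul_le {k : ℕ} (hG : G.CliqueFree k) (hk : 2 ≤ k)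
    (hkn : k ≤ n) {X : Matrix (Fin n) (Fin n) ℂ} (hX : X ∈ Ik n k) :
    (G.adjMatrix ℂ * X).trace.re ≤ k - 1 - 1 / k := by
  have hk' : (2 : ℝ) ≤ k := by exact_mod_cast hk
  refine G.re_trace_adjMatrix_mul_le_of_mem_Ik hkn ?_ (fun s hs w hw0 hw => ?_) hX
  · linarith [one_div_le_sub_one_of_two_le hk']
  have hns : ¬ G.IsClique (s : Set (Fin n)) := fun h => hG s ⟨h, hs⟩
  simp only [isClique_iff, Set.Pairwise, not_forall] at hns
  obtain ⟨p, hp, q, hq, hpq, hnadj⟩ := hns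
  exact hs ▸ G.dotProduct_adjMatrix_mulVec_le_of_not_adj hw0 hw hp hq hpq hnadj

variable {G} in
theorem IsNClique.exists_mem_Ik_re_trace_adjMatrix_mul_eq_s7 {k : ℕ} (hk : 0 < k)
    {s : Finset (Fin n)} (hs : G.IsNClique k s) :
    ∃ X ∈ Ik n k, (G.adjMatrix ℂ * X).trace.re = k - 1 := by
  obtain ⟨hcl, hcard⟩ := hs
  set c : ℝ := (√k)⁻¹
  have hc2 : c ^ 2 * k = 1 := by
    rw [inv_pow, Real.sq_sqrt (Nat.cast_nonneg k), inv_mul_cancel₀ (by positivity)]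
  set w : Fin n → ℝ := fun a => if a ∈ s then c else 0
  have hw : ∀ a ∉ s, w a = 0 := fun a ha => if_neg ha
  have hsum₁ : ∑ a, w a = k * c := by simp [w, hcard]
  have hsum₂ : ∑ a, w a ^ 2 = 1 := by simp [w, ite_pow, hcard, ← hc2, mul_comm]
  set v : Fin n → ℂ := fun a => (w a : ℂ)
  refine ⟨vecMulVec v (star v), ⟨posSemidef_vecMulVec_self_star v,
    ⟨1, fun _ => v, fun _ => ?_, by simp⟩, ?_⟩, ?_⟩
  · rw [suppCard, ← hcard]
    refine (card_le_card fun a ha => ?_)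
    exact (by simpa [v, w] using ha : a ∈ s ∧ c ≠ 0).1
  · rw [re_trace_vecMulVec_star]
    simpa [v] using hsum₂.le
  · have hQ := G.dotProduct_adjMatrix_mulVec_add_compl w
    rw [G.dotProduct_compl_adjMatrix_mulVec_eq_zero hcl hw, hsum₁, hsum₂] at hQ
    rw [trace_adjMatrix_mul_vecMulVec_ofReal, Complex.ofReal_re]
    linear_combination hQ + k * hc2

end

end SimpleGraph

theorem clique_iff_mu_ge_general (n : ℕ) (G : SimpleGraph (Fin n))
    [DecidableRel G.Adj] :
    ∀ k : ℕ, 2 ≤ k → k ≤ n →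
      ((∃ s : Finset (Fin n), G.IsNClique k s) ↔
        (k : ℝ) - 1 ≤ sSup {t : ℝ | ∃ X ∈ Ik n k, t = ((G.adjMatrix ℂ * X).trace).re}) ∧
      ((¬ ∃ s : Finset (Fin n), G.IsNClique k s) →
        sSup {t : ℝ | ∃ X ∈ Ik n k, t = ((G.adjMatrix ℂ * X).trace).re} ≤
          (k : ℝ) - 1 - 1 / (k : ℝ)) := by
  intro k hk hkn
  set S := {t : ℝ | ∃ X ∈ Ik n k, t = ((G.adjMatrix ℂ * X).trace).re}
  have hbdd : BddAbove S :=
    ⟨k - 1, fun _ ⟨X, hX, ht⟩ => ht ▸ G.re_trace_adjMatrix_mul_le_sub_one (by omega) hkn hX⟩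
  have hfree (hno : ¬ ∃ s : Finset (Fin n), G.IsNClique k s) : sSup S ≤ k - 1 - 1 / k := by
    have hG : G.CliqueFree k := not_exists.1 hno
    refine Real.sSup_le (fun _ ⟨X, hX, ht⟩ => ht ▸ hG.re_trace_adjMatrix_mul_le hk hkn hX) ?_
    linarith [one_div_le_sub_one_of_two_le (show (2 : ℝ) ≤ k by exact_mod_cast hk)]
  refine ⟨⟨fun ⟨s, hs⟩ => ?_, fun hμ => by_contra fun hno => ?_⟩, hfree⟩
  · obtain ⟨X, hX, hval⟩ := hs.exists_mem_Ik_re_trace_adjMatrix_mul_eq_s7 (by omega)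
    exact le_csSup hbdd ⟨X, hX, hval.symm⟩
  · have : 0 < 1 / (k : ℝ) := by positivity
    linarith [hfree hno]

/-- A graph contains a `k`-clique iff `μ(k, C) ≥ k - 1`, where
`μ(k, C) = sup { Tr(C X) : X ∈ I_k }` and `C` is the adjacency matrix; moreover, if there
is no `k`-clique then `μ(k, C) ≤ k - 1 - 1/k`. -/
theorem clique_iff_mu_ge (n : ℕ) (hn : 2 ≤ n) (G : SimpleGraph (Fin n))
    [DecidableRel G.Adj] :
    ∀ k : ℕ, 2 ≤ k → k ≤ n →
      ((∃ s : Finset (Fin n), G.IsNClique k s) ↔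
        (k : ℝ) - 1 ≤ sSup {t : ℝ | ∃ X ∈ Ik n k, t = ((G.adjMatrix ℂ * X).trace).re}) ∧
      ((¬ ∃ s : Finset (Fin n), G.IsNClique k s) →
        sSup {t : ℝ | ∃ X ∈ Ik n k, t = ((G.adjMatrix ℂ * X).trace).re} ≤
          (k : ℝ) - 1 - 1 / (k : ℝ)) :=
  clique_iff_mu_ge_general n G
end
end

section
/- Let M ∈ ℂ^{n×n} be positive semidefinite and let k be an integer with 1 ≤ k ≤ n. For each subset J ⊆ {1,…,n}, let T_J := range(M) ∩ {v ∈ ℂ^n : v_j = 0 for all j ∈ J}. Then M is k-incoherent if and only if there exists a family of positive semidefinite matrices (M_J), indexed by the subsets J ⊆ {1,…,n} with |J| = n − k, such that M = ∑_J M_J and range(M_J) ⊆ T_J for every such J. -/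
/-!
For `V` with columns `vᵢ`, `∑ vᵢ vᵢ* = V Vᴴ` has the same rank as `V`, so its range is the span
of the `vᵢ`. Given a `k`-incoherent decomposition, assign each `vᵢ` a set `J` of `n - k`
coordinates on which it vanishes and let `M_J` collect the `vᵢ vᵢ*` assigned to `J`: its range
is spanned by vectors of `range M` vanishing on `J`. Conversely, write each `M_J = ∑ wᵢ wᵢ*` (e.g. via
`M_J = Bᴴ B`); the `wᵢ` lie in `range M_J ⊆ T_J`, so they vanish on `J` and have at most `k`
nonzero entries.
-/

open Matrix BigOperators Finset ComplexOrder

noncomputable section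

namespace Matrix

variable {𝕜 n ι : Type*} [RCLike 𝕜] [Fintype ι]

lemma sum_vecMulVec_self_star_eq (v : ι → n → 𝕜) :
    ∑ i, vecMulVec (v i) (star (v i)) = (of v)ᵀ * (of v)ᵀᴴ := by
  ext a b
  simp [mul_apply, vecMulVec_apply, sum_apply]

variable [Fintype n]

lemma range_mulVecLin_sum_vecMulVec_self_star (v : ι → n → 𝕜) :
    LinearMap.range (∑ i, vecMulVec (v i) (star (v i))).mulVecLin =
      Submodule.span 𝕜 (Set.range v) := by
  classical
  set V := (of v)ᵀ
  have hle : LinearMap.range (V * Vᴴ).mulVecLin ≤ LinearMap.range V.mulVecLin := by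
    rw [mulVecLin_mul]
    exact LinearMap.range_comp_le_range _ _
  rw [sum_vecMulVec_self_star_eq, Submodule.eq_of_le_of_finrank_eq hle
    (rank_self_mul_conjTranspose V), range_mulVecLin]
  rfl

lemma range_mulVecLin_sum_vecMulVec_self_star_le_iff (v : ι → n → 𝕜)
    (S : Submodule 𝕜 (n → 𝕜)) :
    LinearMap.range (∑ i, vecMulVec (v i) (star (v i))).mulVecLin ≤ S ↔ ∀ i, v i ∈ S := by
  rw [range_mulVecLin_sum_vecMulVec_self_star, Submodule.span_le, Set.range_subset_iff]
  rfl

open scoped MatrixOrder in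
lemma PosSemidef.exists_eq_sum_vecMulVec_self_star {A : Matrix n n 𝕜} (hA : A.PosSemidef) :
    ∃ v : n → n → 𝕜, A = ∑ i, vecMulVec (v i) (star (v i)) := by
  classical
  obtain ⟨B, rfl⟩ := CStarAlgebra.nonneg_iff_eq_star_mul_self.mp hA.nonneg
  refine ⟨fun i => star (B i), ?_⟩
  have hV : (of fun i => star (B i))ᵀ = Bᴴ := rfl
  rw [sum_vecMulVec_self_star_eq, hV, conjTranspose_conjTranspose, star_eq_conjTranspose]

section Vanishing

variable {R ι : Type*} [CommSemiring R] [Fintype ι]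

/-- The subspace `T_J` of the statement. -/
def rangeVanishingOn (M : Matrix ι ι R) (J : Finset ι) : Submodule R (ι → R) :=
  LinearMap.range M.mulVecLin ⊓ Submodule.pi J fun _ => ⊥

lemma mem_rangeVanishingOn {M : Matrix ι ι R} {J : Finset ι} {v : ι → R} :
    v ∈ M.rangeVanishingOn J ↔ v ∈ LinearMap.range M.mulVecLin ∧ ∀ j ∈ J, v j = 0 := by
  simp [rangeVanishingOn]

lemma coe_rangeVanishingOn (M : Matrix ι ι R) (J : Finset ι) :
    (M.rangeVanishingOn J : Set (ι → R)) =
      (LinearMap.range M.mulVecLin : Set (ι → R)) ∩ {v | ∀ j ∈ J, v j = 0} :=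
  Set.ext fun _ => mem_rangeVanishingOn

end Vanishing

end Matrix

section SuppCard

variable {n k : ℕ}

lemma exists_card_eq_sub_forall_eq_zero_of_suppCard_le {v : Fin n → ℂ} (hv : suppCard v ≤ k) :
    ∃ J : Finset (Fin n), J.card = n - k ∧ ∀ j ∈ J, v j = 0 := by
  classical
  have hzeros : n - k ≤ (univ.filter fun j => v j = 0).card := by
    have hsplit := card_filter_add_card_filter_not (s := univ) fun j => v j = 0
    rw [card_univ, Fintype.card_fin] at hsplit
    rw [suppCard] at hv
    simp only [ne_eq] at hv
    omega
  obtain ⟨J, hJ, hcard⟩ := exists_subset_card_eq hzeros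
  exact ⟨J, hcard, fun j hj => (mem_filter.mp (hJ hj)).2⟩

lemma suppCard_le_sub_card_of_forall_eq_zero {v : Fin n → ℂ} {J : Finset (Fin n)}
    (hv : ∀ j ∈ J, v j = 0) : suppCard v ≤ n - J.card := by
  have hsupp : (univ.filter fun j => v j ≠ 0) ⊆ Jᶜ := fun j hj =>
    mem_compl.mpr fun hjJ => (mem_filter.mp hj).2 (hv j hjJ)
  simpa [suppCard, card_compl] using card_le_card hsupp

lemma kIncoherent_sum_vecMulVec_self_star {ι : Type*} [Fintype ι] (v : ι → Fin n → ℂ)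
    (hv : ∀ i, suppCard (v i) ≤ k) : KIncoherent k (∑ i, vecMulVec (v i) (star (v i))) :=
  ⟨_, v ∘ (Fintype.equivFin ι).symm, fun _ => hv _,
    (Fintype.sum_equiv (Fintype.equivFin ι).symm _ _ fun _ => rfl).symm⟩

end SuppCard

theorem kIncoherent_iff_subspace_decomposition_general (n k : ℕ)
    (M : Matrix (Fin n) (Fin n) ℂ) :
    KIncoherent k M ↔
      ∃ W : {J : Finset (Fin n) // J.card = n - k} → Matrix (Fin n) (Fin n) ℂ,
        (∀ J, (W J).PosSemidef) ∧ M = ∑ J, W J ∧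
        ∀ J : {J : Finset (Fin n) // J.card = n - k},
          (LinearMap.range (W J).mulVecLin : Set (Fin n → ℂ)) ⊆
            (LinearMap.range M.mulVecLin : Set (Fin n → ℂ)) ∩
              {v : Fin n → ℂ | ∀ j ∈ J.val, v j = 0} := by
  classical
  simp_rw [← coe_rangeVanishingOn, SetLike.coe_subset_coe]
  constructor
  · rintro ⟨m, v, hsupp, rfl⟩
    choose J hJcard hJzero using
      fun i => exists_card_eq_sub_forall_eq_zero_of_suppCard_le (hsupp i)
    let f : Fin m → {J : Finset (Fin n) // J.card = n - k} := fun i => ⟨J i, hJcard i⟩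
    refine ⟨fun J => ∑ i : {i // f i = J}, vecMulVec (v i) (star (v i)),
      fun J => posSemidef_sum _ fun _ _ => posSemidef_vecMulVec_self_star _,
      (Fintype.sum_fiberwise f _).symm, fun J => ?_⟩
    rw [range_mulVecLin_sum_vecMulVec_self_star_le_iff]
    rintro ⟨i, rfl⟩
    refine mem_rangeVanishingOn.mpr ⟨?_, hJzero i⟩
    rw [range_mulVecLin_sum_vecMulVec_self_star]
    exact Submodule.subset_span ⟨i, rfl⟩
  · rintro ⟨W, hW, hM, hWT⟩
    choose w hw using fun J => (hW J).exists_eq_sum_vecMulVec_self_star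
    have hwT : ∀ J i, w J i ∈ M.rangeVanishingOn J.val := fun J => by
      rw [← range_mulVecLin_sum_vecMulVec_self_star_le_iff, ← hw J]
      exact hWT J
    have hMw : M = ∑ p : _ × Fin n, vecMulVec (w p.1 p.2) (star (w p.1 p.2)) := by
      rw [hM, Fintype.sum_prod_type]
      exact Finset.sum_congr rfl fun J _ => hw J
    rw [hMw]
    refine kIncoherent_sum_vecMulVec_self_star _ fun p => ?_
    obtain ⟨-, hzero⟩ := mem_rangeVanishingOn.mp (hwT p.1 p.2)
    calc suppCard (w p.1 p.2) ≤ n - p.1.val.card := suppCard_le_sub_card_of_forall_eq_zero hzero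
      _ ≤ k := by rw [p.1.prop]; omega

/-- A PSD matrix `M` is `k`-incoherent iff it can be written as a sum of PSD matrices
`M_J`, indexed by the `(n-k)`-element subsets `J`, with `range(M_J) ⊆ range(M) ∩ {v : v_j = 0 ∀ j ∈ J}`. -/
theorem kIncoherent_iff_subspace_decomposition (n k : ℕ) (hk : 1 ≤ k) (hkn : k ≤ n)
    (M : Matrix (Fin n) (Fin n) ℂ) (hM : M.PosSemidef) :
    KIncoherent k M ↔
      ∃ W : {J : Finset (Fin n) // J.card = n - k} → Matrix (Fin n) (Fin n) ℂ,
        (∀ J, (W J).PosSemidef) ∧ M = ∑ J, W J ∧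
        ∀ J : {J : Finset (Fin n) // J.card = n - k},
          (LinearMap.range (W J).mulVecLin : Set (Fin n → ℂ)) ⊆
            (LinearMap.range M.mulVecLin : Set (Fin n → ℂ)) ∩
              {v : Fin n → ℂ | ∀ j ∈ J.val, v j = 0} :=
  kIncoherent_iff_subspace_decomposition_general n k M
end
end
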